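/- arXiv:2307.07810 — 2 statements merged into one kernel-verified Lean document; each statement's English description precedes it below -/
import Mathlib

section
/- Let G be a graph on n vertices and let k, l ≥ 0. A real matrix M with rows indexed by functions I : Fin l → Fin n and columns indexed by J : Fin k → Fin n is Aut(G)-equivariant (i.e., M (σ ∘ I) (σ ∘ J) = M I J for all σ ∈ Aut(G), I, J) if and only if M lies in the ℝ-linear span of the set of G-homomorphism matrices X_𝐇^G, where 𝐇 ranges over all (k,l)-bilabelled graphs (H, 𝐤, 𝐥) with H a graph on Fin m for some m ∈ ℕ. -/
/-!
Postcomposing with an automorphism of `G` permutes homomorphisms, so homomorphism matrices are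
equivariant. Conversely, an equivariant matrix is constant on `Aut(G)`-orbits of index pairs
`(I, J)`, so averaging over `Aut(G)` writes it as a combination of the transporter matrices counting
the `σ ∈ Aut(G)` with `σ ∘ I₀ = I` and `σ ∘ J₀ = J`. Such a matrix counts the injective
homomorphisms `G → G` (automorphisms, by finiteness) with labels `(J₀, I₀)`. Finally, grouping the
homomorphisms `H → G` by their kernel gives `hom(H) = ∑_r inj(H / r)` over all partitions `r` of
`V(H)`; the terms with `r ≠ ⊥` live on fewer vertices, so strong induction on `|V(H)|` puts every
injective-homomorphism matrix in the span of homomorphism matrices.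
-/

/-- The `G`-homomorphism matrix of a `(k,l)`-bilabelled graph `(H, kt, lt)`:
the `(I,J)`-entry counts graph homomorphisms `φ : V(H) → Fin n` from `H` to `G`
with `φ ∘ lt = I` and `φ ∘ kt = J`. -/
noncomputable def homMatrix (n : ℕ) (adjG : Fin n → Fin n → Prop)
    {V : Type} [Fintype V] (adjH : V → V → Prop)
    {k l : ℕ} (kt : Fin k → V) (lt : Fin l → V) :
    Matrix (Fin l → Fin n) (Fin k → Fin n) ℝ :=
  Matrix.of fun I J =>
    (Nat.card {φ : V → Fin n //
      (∀ u v, adjH u v → adjG (φ u) (φ v)) ∧ φ ∘ lt = I ∧ φ ∘ kt = J} : ℝ)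

section Averaging

variable (R : Type*) (Γ : Type*) [Group Γ] {ι κ : Type*} [MulAction Γ ι] [MulAction Γ κ]

noncomputable def transporterMatrix [NatCast R] (i₀ : ι) (j₀ : κ) : Matrix ι κ R :=
  Matrix.of fun i j => (Nat.card {g : Γ // g • i₀ = i ∧ g • j₀ = j} : R)

variable {R Γ} [Fintype Γ] [Fintype ι] [Fintype κ]

theorem sum_mul_transporterMatrix_apply [Semiring R] (c : ι → κ → R) (i : ι) (j : κ) :
    ∑ i₀, ∑ j₀, c i₀ j₀ * transporterMatrix R Γ i₀ j₀ i j = ∑ g : Γ, c (g⁻¹ • i) (g⁻¹ • j) := by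
  classical
  simp only [transporterMatrix, Matrix.of_apply, Nat.card_eq_fintype_card, Fintype.card_subtype,
    Finset.card_filter, Nat.cast_sum, Nat.cast_ite, Nat.cast_one, Nat.cast_zero, Finset.mul_sum]
  rw [Finset.sum_congr rfl fun i₀ _ => Finset.sum_comm, Finset.sum_comm]
  refine Finset.sum_congr rfl fun g _ => ?_
  simp [smul_eq_iff_eq_inv_smul, ite_and]

theorem eq_sum_smul_transporterMatrix [Field R] [CharZero R] (M : Matrix ι κ R)
    (hM : ∀ (g : Γ) i j, M (g • i) (g • j) = M i j) :
    M = ∑ i₀, ∑ j₀, (M i₀ j₀ / Fintype.card Γ) • transporterMatrix R Γ i₀ j₀ := by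
  ext i j
  have hΓ : (Fintype.card Γ : R) ≠ 0 := Nat.cast_ne_zero.mpr Fintype.card_ne_zero
  simp only [Matrix.sum_apply, Matrix.smul_apply, smul_eq_mul, sum_mul_transporterMatrix_apply, hM,
    Finset.sum_const, Finset.card_univ, nsmul_eq_mul]
  exact (mul_div_cancel₀ _ hΓ).symm

end Averaging

section Automorphisms

variable {V : Type*} (adj : V → V → Prop)

def autGroup : Subgroup (Equiv.Perm V) where
  carrier := {σ | ∀ i j, adj i j ↔ adj (σ i) (σ j)}
  mul_mem' hσ hτ i j := (hτ i j).trans (hσ _ _)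
  one_mem' _ _ := Iff.rfl
  inv_mem' {σ} hσ i j := by simpa using (hσ (σ⁻¹ i) (σ⁻¹ j)).symm

variable {adj}

theorem mem_autGroup_iff [Finite V] {σ : Equiv.Perm V} :
    σ ∈ autGroup adj ↔ ∀ i j, adj i j → adj (σ i) (σ j) := by
  refine ⟨fun hσ i j => (hσ i j).mp, fun hσ i j => ⟨hσ i j, fun h => ?_⟩⟩
  -- `σ × σ` maps the finite edge set injectively into itself, hence onto itself.
  have hmaps : Set.MapsTo (Prod.map σ σ) {p : V × V | adj p.1 p.2} {p | adj p.1 p.2} :=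
    fun p hp => hσ _ _ hp
  have hinj : Function.Injective (Prod.map σ σ) := σ.injective.prodMap σ.injective
  obtain ⟨⟨a, b⟩, hab, he⟩ :=
    (((Set.toFinite _).injOn_iff_bijOn_of_mapsTo hmaps).mp hinj.injOn).surjOn
      (show (σ i, σ j) ∈ _ from h)
  obtain ⟨rfl, rfl⟩ := Prod.ext_iff.mp (hinj (a₂ := (i, j)) he)
  exact hab

variable (adj)

noncomputable def injHomEquivAutGroup [Finite V] :
    {φ : V → V // Function.Injective φ ∧ ∀ i j, adj i j → adj (φ i) (φ j)} ≃ autGroup adj where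
  toFun φ := ⟨Equiv.ofBijective φ.1 (Finite.injective_iff_bijective.mp φ.2.1),
    mem_autGroup_iff.mpr φ.2.2⟩
  invFun σ := ⟨σ.1, σ.1.injective, fun i j => (σ.2 i j).mp⟩
  left_inv _ := rfl
  right_inv _ := Subtype.ext (Equiv.ext fun _ => rfl)

end Automorphisms

namespace Setoid

variable {V : Type*}

instance [Finite V] : Finite (Setoid V) :=
  Finite.of_injective (fun r : Setoid V => ⇑r) fun _ _ h =>
    Setoid.ext fun a b => iff_of_eq (congrFun (congrFun h a) b)

theorem card_quotient_lt [Finite V] {r : Setoid V} (hr : r ≠ ⊥) :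
    Nat.card (Quotient r) < Nat.card V := by
  classical
  have := Fintype.ofFinite V
  simp only [Nat.card_eq_fintype_card]
  refine Fintype.card_lt_of_surjective_not_injective _ Quotient.mk_surjective fun hinj => hr ?_
  rw [← ker_mk_eq r]
  exact ker_eq_bot_iff.mpr hinj

def kerEqEquivInjective (r : Setoid V) (X : Type*) :
    {φ : V → X // ker φ = r} ≃ {ψ : Quotient r → X // Function.Injective ψ} where
  toFun φ := ⟨Quotient.lift φ.1 fun a b h => ker_def.mp (by rw [φ.2]; exact h),
    fun a b => Quotient.inductionOn₂ a b fun u v huv =>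
      Quotient.sound (by rw [← φ.2]; exact ker_def.mpr huv)⟩
  invFun ψ := ⟨ψ.1 ∘ Quotient.mk r, Setoid.ext fun _ _ => ψ.2.eq_iff.trans Quotient.eq⟩
  left_inv _ := rfl
  right_inv _ := Subtype.ext (funext (Quotient.ind fun _ => rfl))

end Setoid

noncomputable def injHomMatrix (n : ℕ) (adjG : Fin n → Fin n → Prop)
    {V : Type} (adjH : V → V → Prop) {k l : ℕ} (kt : Fin k → V) (lt : Fin l → V) :
    Matrix (Fin l → Fin n) (Fin k → Fin n) ℝ :=
  Matrix.of fun I J =>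
    (Nat.card {φ : V → Fin n // Function.Injective φ ∧
      (∀ u v, adjH u v → adjG (φ u) (φ v)) ∧ φ ∘ lt = I ∧ φ ∘ kt = J} : ℝ)

theorem injHomMatrix_self_eq_transporterMatrix (n : ℕ) (adjG : Fin n → Fin n → Prop) {k l : ℕ}
    (J₀ : Fin k → Fin n) (I₀ : Fin l → Fin n) :
    injHomMatrix n adjG adjG J₀ I₀ = transporterMatrix ℝ (autGroup adjG) I₀ J₀ := by
  ext I J
  simp only [injHomMatrix, transporterMatrix, Matrix.of_apply]
  exact congrArg _ <| Nat.card_congr <| (Equiv.subtypeEquivRight fun _ => and_assoc.symm).trans <|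
    (Equiv.subtypeSubtypeEquivSubtypeInter _ _).symm.trans <|
      Equiv.subtypeEquiv (injHomEquivAutGroup adjG) fun _ => by rfl

section HomCounts

variable (n : ℕ) (adjG : Fin n → Fin n → Prop) {k l : ℕ}

theorem injHomMatrix_congr {V W : Type} (e : V ≃ W) {adjH : V → V → Prop}
    {adjH' : W → W → Prop} (he : ∀ u v, adjH' (e u) (e v) ↔ adjH u v)
    (kt : Fin k → V) (lt : Fin l → V) :
    injHomMatrix n adjG adjH kt lt = injHomMatrix n adjG adjH' (e ∘ kt) (e ∘ lt) := by
  ext I J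
  simp only [injHomMatrix, Matrix.of_apply]
  refine congrArg _ (Nat.card_congr (Equiv.subtypeEquiv (e.arrowCongr (Equiv.refl _)) fun φ => ?_))
  have he' (a b : W) : adjH' a b ↔ adjH (e.symm a) (e.symm b) := by
    simpa using he (e.symm a) (e.symm b)
  change _ ↔ Function.Injective (φ ∘ e.symm) ∧ _
  rw [Equiv.injective_comp]
  simp [Function.comp_def, e.forall_congr_left, he']

theorem homMatrix_eq_sum_injHomMatrix {V : Type} [Fintype V] [Fintype (Setoid V)]
    (adjH : V → V → Prop) (kt : Fin k → V) (lt : Fin l → V) :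
    homMatrix n adjG adjH kt lt = ∑ r : Setoid V,
      injHomMatrix n adjG (Relation.Map adjH (Quotient.mk r) (Quotient.mk r))
        (Quotient.mk r ∘ kt) (Quotient.mk r ∘ lt) := by
  ext I J
  simp only [homMatrix, injHomMatrix, Matrix.sum_apply, Matrix.of_apply, ← Nat.cast_sum]
  refine congrArg _ ?_
  rw [← Nat.card_congr (Equiv.sigmaFiberEquiv fun φ : {φ : V → Fin n // _} => Setoid.ker φ.1),
    Nat.card_sigma]
  refine Finset.sum_congr rfl fun r _ => Nat.card_congr ?_
  have hom_iff (ψ : Quotient r → Fin n) :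
      (∀ u v, adjH u v → adjG (ψ ⟦u⟧) (ψ ⟦v⟧)) ↔
        ∀ a b, Relation.Map adjH (Quotient.mk r) (Quotient.mk r) a b → adjG (ψ a) (ψ b) :=
    ⟨fun h _ _ ⟨u, v, huv, hu, hv⟩ => hu ▸ hv ▸ h u v huv,
      fun h u v huv => h _ _ ⟨u, v, huv, rfl, rfl⟩⟩
  -- A homomorphism with kernel `r` is an injective homomorphism out of `H / r` after `Quotient.mk r`.
  exact (Equiv.subtypeSubtypeEquivSubtypeInter _ _).trans <|
    (Equiv.subtypeEquivRight fun _ => and_comm).trans <|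
    (Equiv.subtypeSubtypeEquivSubtypeInter _ _).symm.trans <|
    (Equiv.subtypeEquiv (Setoid.kerEqEquivInjective r _) fun φ =>
      and_congr (hom_iff (Setoid.kerEqEquivInjective r _ φ)) Iff.rfl).trans <|
    Equiv.subtypeSubtypeEquivSubtypeInter _ _

end HomCounts

section Span

variable (n k l : ℕ) (adjG : Fin n → Fin n → Prop)

def homMatrices : Set (Matrix (Fin l → Fin n) (Fin k → Fin n) ℝ) :=
  {X | ∃ (m : ℕ) (adjH : Fin m → Fin m → Prop), (∀ u v, adjH u v → adjH v u) ∧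
    ∃ (kt : Fin k → Fin m) (lt : Fin l → Fin m), X = homMatrix n adjG adjH kt lt}

variable {n k l}

theorem injHomMatrix_mem_span_homMatrices (m : ℕ) (adjH : Fin m → Fin m → Prop)
    (hH : ∀ u v, adjH u v → adjH v u) (kt : Fin k → Fin m) (lt : Fin l → Fin m) :
    injHomMatrix n adjG adjH kt lt ∈ Submodule.span ℝ (homMatrices n k l adjG) := by
  induction m using Nat.strong_induction_on with
  | _ m ih =>
  classical
  have := Fintype.ofFinite (Setoid (Fin m))
  have hbot : injHomMatrix n adjG (Relation.Map adjH (Quotient.mk ⊥) (Quotient.mk ⊥))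
      (Quotient.mk ⊥ ∘ kt) (Quotient.mk ⊥ ∘ lt) = injHomMatrix n adjG adjH kt lt :=
    let e := (Setoid.quotientBotEquiv (α := Fin m)).symm
    (injHomMatrix_congr n adjG e (fun u v => Relation.map_apply_apply e.injective e.injective _ u v)
      kt lt).symm
  have hsplit := homMatrix_eq_sum_injHomMatrix n adjG adjH kt lt
  rw [← Finset.add_sum_erase _ _ (Finset.mem_univ ⊥), hbot] at hsplit
  rw [eq_sub_of_add_eq hsplit.symm]
  refine Submodule.sub_mem _ (Submodule.subset_span ⟨m, adjH, hH, kt, lt, rfl⟩)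
    (Submodule.sum_mem _ fun r hr => ?_)
  have hlt : Nat.card (Quotient r) < m := by
    simpa using Setoid.card_quotient_lt (Finset.ne_of_mem_erase hr)
  let e := Finite.equivFin (Quotient r)
  rw [injHomMatrix_congr n adjG e
    (adjH' := fun a b => Relation.Map adjH (Quotient.mk r) (Quotient.mk r) (e.symm a) (e.symm b))
    (by simp)]
  refine ih _ hlt _ ?_ _ _
  rintro a b ⟨u, v, huv, hu, hv⟩
  exact ⟨v, u, hH u v huv, hv, hu⟩

theorem homMatrix_apply_comp_of_mem_autGroup {σ : Equiv.Perm (Fin n)} (hσ : σ ∈ autGroup adjG)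
    {V : Type} [Fintype V] (adjH : V → V → Prop) (kt : Fin k → V) (lt : Fin l → V)
    (I : Fin l → Fin n) (J : Fin k → Fin n) :
    homMatrix n adjG adjH kt lt (σ ∘ I) (σ ∘ J) = homMatrix n adjG adjH kt lt I J := by
  simp only [homMatrix, Matrix.of_apply]
  refine congrArg _ <| Nat.card_congr <|
    (Equiv.subtypeEquiv ((Equiv.refl V).arrowCongr σ) fun φ => ?_).symm
  exact and_congr (forall₂_congr fun u v => imp_congr_right fun _ => hσ _ _)
    (and_congr σ.injective.comp_left.eq_iff.symm σ.injective.comp_left.eq_iff.symm)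

end Span

/-- A matrix is `Aut(G)`-equivariant if and only if it lies in the
ℝ-linear span of the `G`-homomorphism matrices of all `(k,l)`-bilabelled
graphs (with underlying graph on `Fin m` for some `m`). -/
theorem equivariant_iff_mem_span_homMatrices
    (n k l : ℕ) (adjG : Fin n → Fin n → Prop)
    (hG : ∀ i j, adjG i j → adjG j i)
    (M : Matrix (Fin l → Fin n) (Fin k → Fin n) ℝ) :
    (∀ σ : Equiv.Perm (Fin n), (∀ i j, adjG i j ↔ adjG (σ i) (σ j)) →
      ∀ (I : Fin l → Fin n) (J : Fin k → Fin n), M (⇑σ ∘ I) (⇑σ ∘ J) = M I J) ↔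
    M ∈ Submodule.span ℝ
      {X : Matrix (Fin l → Fin n) (Fin k → Fin n) ℝ |
        ∃ (m : ℕ) (adjH : Fin m → Fin m → Prop),
          (∀ u v, adjH u v → adjH v u) ∧
          ∃ (kt : Fin k → Fin m) (lt : Fin l → Fin m),
            X = homMatrix n adjG adjH kt lt} := by
  classical
  constructor
  · intro hM
    rw [eq_sum_smul_transporterMatrix (Γ := autGroup adjG) M fun σ I J => hM σ σ.2 I J]
    refine Submodule.sum_mem _ fun I₀ _ => Submodule.sum_mem _ fun J₀ _ => Submodule.smul_mem _ _ ?_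
    rw [← injHomMatrix_self_eq_transporterMatrix]
    exact injHomMatrix_mem_span_homMatrices adjG n adjG hG J₀ I₀
  · intro hM σ hσ I J
    induction hM using Submodule.span_induction with
    | mem X hX =>
      obtain ⟨m, adjH, -, kt, lt, rfl⟩ := hX
      exact homMatrix_apply_comp_of_mem_autGroup adjG hσ adjH kt lt I J
    | zero => rfl
    | add X Y _ _ hX hY => simp [hX, hY]
    | smul c X _ hX => simp [hX]
end

section
/- Let n, k, l ≥ 0. For a set partition P of Fin (l+k), let B_P be the real matrix with rows indexed by I : Fin l → Fin n and columns indexed by J : Fin k → Fin n whose (I,J)-entry is 1 if the appended tuple Fin.append I J : Fin (l+k) → Fin n is constant on every block of P, and 0 otherwise. Then the family of matrices B_P, as P ranges over the set partitions of Fin (l+k) with at most n blocks, is a basis of the ℝ-vector space of S_n-equivariant matrices, i.e., of the matrices M satisfying M (σ ∘ I) (σ ∘ J) = M I J for every permutation σ of Fin n and all I, J: these B_P are linearly independent, and every S_n-equivariant matrix lies in their span. -/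
/-!
An `S_n`-orbit of index pairs `(I, J)` is determined by the kernel partition of `Fin.append I J`
(which positions carry equal values), and the kernel partitions that occur are exactly those
with at most `n` blocks. So the orbit indicators `E_Q` form a basis of the equivariant matrices.
As `Fin.append I J` is constant on the blocks of `P` exactly when `P` refines its kernel,
`B_P = ∑_{Q ≥ P} E_Q`: the change of basis is unitriangular for the refinement order, hence the
`B_P` span the same space and, being equally many, are linearly independent.
-/

open scoped Classical

/-- The diagram-basis matrix `B_P` attached to a set partition `P` of
`Fin (l+k)`: its `(I,J)`-entry is `1` if `Fin.append I J` is constant on every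
block of `P`, and `0` otherwise. -/
noncomputable def diagramMatrix (n k l : ℕ)
    (P : Finpartition (Finset.univ : Finset (Fin (l + k)))) :
    Matrix (Fin l → Fin n) (Fin k → Fin n) ℝ :=
  Matrix.of fun I J =>
    if ∀ B ∈ P.parts, ∀ x ∈ B, ∀ y ∈ B, Fin.append I J x = Fin.append I J y
    then 1 else 0

open Finset

namespace Finpartition

variable {α β : Type*} [Fintype α] [DecidableEq α]

noncomputable def ker (f : α → β) : Finpartition (univ : Finset α) :=
  ofSetoid (Setoid.ker f)

theorem mem_part_ker {f : α → β} {x y : α} : y ∈ (ker f).part x ↔ f x = f y :=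
  mem_part_ofSetoid_iff_rel

theorem ker_parts (f : α → β) :
    (ker f).parts = univ.image fun x => univ.filter fun y => f x = f y := by
  simp only [ker, ofSetoid, ofSetSetoid_parts]
  rfl

theorem card_parts_ker_le [Fintype β] (f : α → β) : #(ker f).parts ≤ Fintype.card β := by
  rw [ker_parts]
  calc #(univ.image fun x => univ.filter fun y => f x = f y)
      = #((univ.image f).image fun c => univ.filter fun y => c = f y) := by rw [image_image]; rfl
    _ ≤ Fintype.card β := card_image_le.trans (card_le_univ _)

theorem ker_eq_ker_iff {γ : Type*} {f : α → β} {g : α → γ} :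
    ker f = ker g ↔ ∀ x y, f x = f y ↔ g x = g y := by
  refine ⟨fun h x y => ?_, fun h => ?_⟩
  · rw [← mem_part_ker, h, mem_part_ker]
  · ext B
    simp only [ker_parts, h]

theorem ker_comp_of_injective {γ : Type*} {e : β → γ} (he : e.Injective) (f : α → β) :
    ker (e ∘ f) = ker f :=
  ker_eq_ker_iff.2 fun _ _ => he.eq_iff

theorem parts_eq_image_part (P : Finpartition (univ : Finset α)) :
    P.parts = univ.image P.part := by
  ext B
  refine ⟨fun hB => ?_, fun hB => ?_⟩
  · obtain ⟨x, hx⟩ := P.nonempty_of_mem_parts hB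
    exact mem_image.2 ⟨x, mem_univ x, P.part_eq_of_mem hB hx⟩
  · obtain ⟨x, -, rfl⟩ := mem_image.1 hB
    exact P.part_mem.2 (mem_univ x)

theorem ker_part (P : Finpartition (univ : Finset α)) : ker P.part = P := by
  ext B
  rw [ker_parts, parts_eq_image_part P]
  congr! with x
  ext y
  simp only [mem_filter, mem_univ, true_and]
  rw [P.mem_part_iff_part_eq_part (mem_univ y) (mem_univ x), eq_comm]

theorem exists_ker_eq [Fintype β] (P : Finpartition (univ : Finset α))
    (hP : #P.parts ≤ Fintype.card β) : ∃ f : α → β, ker f = P := by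
  obtain ⟨e⟩ : Nonempty (P.parts ↪ β) :=
    Function.Embedding.nonempty_of_card_le (by simpa using hP)
  let g : α → P.parts := fun x => ⟨P.part x, P.part_mem.2 (mem_univ x)⟩
  refine ⟨e ∘ g, ?_⟩
  rw [ker_comp_of_injective e.injective, ← ker_comp_of_injective Subtype.val_injective]
  exact ker_part P

theorem le_ker_iff {P : Finpartition (univ : Finset α)} {f : α → β} :
    P ≤ ker f ↔ ∀ B ∈ P.parts, ∀ x ∈ B, ∀ y ∈ B, f x = f y := by
  refine ⟨fun h B hB x hx y hy => ?_, fun h B hB => ?_⟩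
  · obtain ⟨C, hC, hBC⟩ := h hB
    rw [ker_parts] at hC
    obtain ⟨z, -, rfl⟩ := mem_image.1 hC
    have hzx : f z = f x := by simpa using hBC hx
    have hzy : f z = f y := by simpa using hBC hy
    rw [← hzx, hzy]
  · obtain ⟨x, hx⟩ := P.nonempty_of_mem_parts hB
    exact ⟨(ker f).part x, (ker f).part_mem.2 (mem_univ x),
      fun y hy => mem_part_ker.2 (h B hB x hx y hy)⟩

theorem exists_perm_comp_of_ker_eq [Finite β] {f g : α → β} (h : ker f = ker g) :
    ∃ σ : Equiv.Perm β, f = σ ∘ g := by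
  let e : Set.range g ≃ Set.range f := (Setoid.quotientKerEquivRange g).symm.trans
    ((Quotient.congrRight fun x y => (ker_eq_ker_iff.1 h x y).symm).trans
      (Setoid.quotientKerEquivRange f))
  refine ⟨e.extendSubtype, funext fun x => ?_⟩
  rw [Function.comp_apply, e.extendSubtype_apply_of_mem (g x) ⟨x, rfl⟩]
  have hg : (Setoid.quotientKerEquivRange g).symm ⟨g x, x, rfl⟩ = ⟦x⟧ := by
    rw [Equiv.symm_apply_eq]; rfl
  simp only [e, Equiv.trans_apply, hg]
  rfl

end Finpartition

theorem Fin.comp_append {α β : Type*} {m n : ℕ} (φ : α → β) (u : Fin m → α)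
    (v : Fin n → α) :
    φ ∘ Fin.append u v = Fin.append (φ ∘ u) (φ ∘ v) := by
  funext i
  induction i using Fin.addCases <;> simp

open Finpartition

abbrev BoundedPartition (n m : ℕ) :=
  {P : Finpartition (univ : Finset (Fin m)) // #P.parts ≤ n}

section DiagramBasis

variable {n k l : ℕ}

noncomputable def orbitType (I : Fin l → Fin n) (J : Fin k → Fin n) :
    BoundedPartition n (l + k) :=
  ⟨ker (Fin.append I J), by simpa using card_parts_ker_le (Fin.append I J)⟩

theorem orbitType_perm_comp (σ : Equiv.Perm (Fin n)) (I : Fin l → Fin n) (J : Fin k → Fin n) :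
    orbitType (σ ∘ I) (σ ∘ J) = orbitType I J := by
  refine Subtype.ext ?_
  simp only [orbitType]
  rw [← Fin.comp_append, ker_comp_of_injective σ.injective]

theorem exists_perm_of_orbitType_eq {I I' : Fin l → Fin n} {J J' : Fin k → Fin n}
    (h : orbitType I J = orbitType I' J') :
    ∃ σ : Equiv.Perm (Fin n), I = σ ∘ I' ∧ J = σ ∘ J' := by
  obtain ⟨σ, hσ⟩ := exists_perm_comp_of_ker_eq (congrArg Subtype.val h)
  rw [Fin.comp_append] at hσ
  exact ⟨σ, Prod.ext_iff.1
    ((Fin.appendEquiv l k).injective (a₁ := (I, J)) (a₂ := (σ ∘ I', σ ∘ J')) hσ)⟩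

theorem exists_orbitType_eq (Q : BoundedPartition n (l + k)) :
    ∃ I J, orbitType (n := n) (k := k) (l := l) I J = Q := by
  obtain ⟨f, hf⟩ := exists_ker_eq (β := Fin n) Q.1 (by simpa using Q.2)
  refine ⟨fun i => f (Fin.castAdd k i), fun j => f (Fin.natAdd l j), Subtype.ext ?_⟩
  simp only [orbitType]
  rw [Fin.append_castAdd_natAdd, hf]

noncomputable def orbitMatrix (Q : BoundedPartition n (l + k)) :
    Matrix (Fin l → Fin n) (Fin k → Fin n) ℝ :=
  Matrix.of fun I J => if orbitType I J = Q then 1 else 0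

theorem orbitMatrix_apply (Q : BoundedPartition n (l + k)) (I : Fin l → Fin n)
    (J : Fin k → Fin n) : orbitMatrix Q I J = if orbitType I J = Q then 1 else 0 :=
  rfl

theorem sum_smul_orbitMatrix_apply (c : BoundedPartition n (l + k) → ℝ) (I : Fin l → Fin n)
    (J : Fin k → Fin n) : (∑ Q, c Q • orbitMatrix Q) I J = c (orbitType I J) := by
  simp [orbitMatrix_apply, Matrix.sum_apply]

theorem sum_orbitMatrix_apply (s : Finset (BoundedPartition n (l + k))) (I : Fin l → Fin n)
    (J : Fin k → Fin n) :
    (∑ Q ∈ s, orbitMatrix Q) I J = if orbitType I J ∈ s then 1 else 0 := by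
  simp [orbitMatrix_apply, Matrix.sum_apply]

theorem diagramMatrix_eq_sum_orbitMatrix (P : BoundedPartition n (l + k)) :
    diagramMatrix n k l P.1 = ∑ Q with P ≤ Q, orbitMatrix Q := by
  ext I J
  simp only [sum_orbitMatrix_apply, mem_filter, mem_univ, true_and, diagramMatrix,
    Matrix.of_apply]
  exact if_congr le_ker_iff.symm rfl rfl

theorem orbitMatrix_mem_span_diagramMatrix (Q : BoundedPartition n (l + k)) :
    orbitMatrix Q ∈ Submodule.span ℝ
      (Set.range fun P : BoundedPartition n (l + k) => diagramMatrix n k l P.1) := by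
  induction Q using WellFoundedGT.induction with
  | _ Q ih =>
    have hsplit : orbitMatrix Q
        = diagramMatrix n k l Q.1 - ∑ R with Q < R, orbitMatrix R := by
      ext I J
      simp only [Matrix.sub_apply, diagramMatrix_eq_sum_orbitMatrix, sum_orbitMatrix_apply,
        orbitMatrix_apply, mem_filter, mem_univ, true_and]
      rcases eq_or_ne (orbitType I J) Q with h | h
      · simp [h]
      · simp [h, h.symm.le_iff_lt]
    rw [hsplit]
    exact Submodule.sub_mem _ (Submodule.subset_span ⟨Q, rfl⟩)
      (Submodule.sum_mem _ fun R hR => ih R (mem_filter.1 hR).2)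

theorem span_orbitMatrix_eq_span_diagramMatrix :
    Submodule.span ℝ (Set.range (orbitMatrix (n := n) (k := k) (l := l)))
      = Submodule.span ℝ
        (Set.range fun P : BoundedPartition n (l + k) => diagramMatrix n k l P.1) := by
  refine le_antisymm (Submodule.span_le.2 ?_) (Submodule.span_le.2 ?_)
  · rintro _ ⟨Q, rfl⟩
    exact orbitMatrix_mem_span_diagramMatrix Q
  · rintro _ ⟨P, rfl⟩
    change diagramMatrix n k l P.1 ∈ _
    rw [diagramMatrix_eq_sum_orbitMatrix]
    exact Submodule.sum_mem _ fun Q _ => Submodule.subset_span ⟨Q, rfl⟩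

theorem linearIndependent_orbitMatrix :
    LinearIndependent ℝ (orbitMatrix (n := n) (k := k) (l := l)) := by
  refine Fintype.linearIndependent_iff.2 fun c hc Q => ?_
  obtain ⟨I, J, rfl⟩ := exists_orbitType_eq Q
  rw [← sum_smul_orbitMatrix_apply c I J, hc, Matrix.zero_apply]

theorem linearIndependent_diagramMatrix :
    LinearIndependent ℝ fun P : BoundedPartition n (l + k) => diagramMatrix n k l P.1 := by
  rw [linearIndependent_iff_card_eq_finrank_span, Set.finrank,
    ← span_orbitMatrix_eq_span_diagramMatrix]
  exact linearIndependent_iff_card_eq_finrank_span.1 linearIndependent_orbitMatrix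

variable (n k l) in
def equivariantSubmodule : Submodule ℝ (Matrix (Fin l → Fin n) (Fin k → Fin n) ℝ) where
  carrier := {M | ∀ (σ : Equiv.Perm (Fin n)) (I : Fin l → Fin n) (J : Fin k → Fin n),
    M (σ ∘ I) (σ ∘ J) = M I J}
  add_mem' hM hN σ I J := by simp only [Matrix.add_apply, hM σ I J, hN σ I J]
  zero_mem' _ _ _ := rfl
  smul_mem' c M hM σ I J := by simp only [Matrix.smul_apply, hM σ I J]

theorem orbitMatrix_mem_equivariantSubmodule (Q : BoundedPartition n (l + k)) :
    orbitMatrix Q ∈ equivariantSubmodule n k l := fun σ I J => by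
  simp only [orbitMatrix_apply, orbitType_perm_comp]

theorem span_orbitMatrix_eq_equivariantSubmodule :
    Submodule.span ℝ (Set.range (orbitMatrix (n := n) (k := k) (l := l)))
      = equivariantSubmodule n k l := by
  refine le_antisymm (Submodule.span_le.2 (Set.range_subset_iff.2
    orbitMatrix_mem_equivariantSubmodule)) fun M hM => ?_
  choose I J hIJ using exists_orbitType_eq (n := n) (k := k) (l := l)
  have hM_eq : M = ∑ Q, M (I Q) (J Q) • orbitMatrix Q := by
    ext I' J'
    rw [sum_smul_orbitMatrix_apply]
    generalize hT : orbitType I' J' = T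
    obtain ⟨σ, rfl, rfl⟩ := exists_perm_of_orbitType_eq (hT.trans (hIJ T).symm)
    exact hM σ _ _
  rw [hM_eq]
  exact Submodule.sum_mem _ fun Q _ => Submodule.smul_mem _ _ (Submodule.subset_span ⟨Q, rfl⟩)

end DiagramBasis

/-- The matrices `B_P`, as `P` ranges over set partitions of
`Fin (l+k)` with at most `n` blocks, form a basis of the space of
`S_n`-equivariant matrices: they are linearly independent, and a matrix is
`S_n`-equivariant exactly when it lies in their span. -/
theorem diagram_basis
    (n k l : ℕ) :
    LinearIndependent ℝ
      (fun P : {P : Finpartition (Finset.univ : Finset (Fin (l + k))) //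
          P.parts.card ≤ n} => diagramMatrix n k l P.1) ∧
    ∀ M : Matrix (Fin l → Fin n) (Fin k → Fin n) ℝ,
      (∀ (σ : Equiv.Perm (Fin n)) (I : Fin l → Fin n) (J : Fin k → Fin n),
          M (⇑σ ∘ I) (⇑σ ∘ J) = M I J) ↔
      M ∈ Submodule.span ℝ
        (Set.range (fun P : {P : Finpartition (Finset.univ : Finset (Fin (l + k))) //
            P.parts.card ≤ n} => diagramMatrix n k l P.1)) := by
  refine ⟨linearIndependent_diagramMatrix, fun M => ?_⟩
  rw [← span_orbitMatrix_eq_span_diagramMatrix, span_orbitMatrix_eq_equivariantSubmodule]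
  rfl
end
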